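/- Let E be a finite connected directed graph and K a field. If the center Z(KE) of the path algebra is nonzero and not contained in K·1, then the graph E has no sinks and no sources. -/

import Mathlib

/-! Basic infrastructure: directed graphs and their path algebras.

The path algebra `KE` is realized as the non-unital subalgebra generated by the
(images of the) vertices and edges inside the unital algebra `PA K E`, which is the
quotient of the free algebra on vertices and edges by the usual path-algebra
relations (vertices are orthogonal idempotents acting as local units on edges).
Words of composable edges are exactly the paths, so `KE` has the paths as a basis. -/

/-- A directed graph `E = (E⁰, E¹, s, r)`. -/
structure DirGraph : Type 1 where
  V : Type
  Edge : Type
  s : Edge → V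
  r : Edge → V

/-- A (non-unital, possibly non-closed) subset `S` of an algebra is *prime* if it is nonzero
and `a S b = 0` implies `a = 0` or `b = 0` for `a, b ∈ S`. -/
def IsPrimeSet {A : Type} [NonUnitalNonAssocSemiring A] (S : Set A) : Prop :=
  (∃ a ∈ S, a ≠ 0) ∧ ∀ a ∈ S, ∀ b ∈ S, (∀ x ∈ S, a * x * b = 0) → a = 0 ∨ b = 0

/-- `J` is a two-sided ideal of the (possibly non-unital) subalgebra with carrier `S`. -/
def IsIdealOf (K : Type) [Field K] {A : Type} [Ring A] [Algebra K A] (S J : Set A) : Prop :=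
  J ⊆ S ∧ (0 : A) ∈ J ∧ (∀ x ∈ J, ∀ y ∈ J, x + y ∈ J) ∧
    (∀ k : K, ∀ x ∈ J, k • x ∈ J) ∧ (∀ a ∈ S, ∀ x ∈ J, a * x ∈ J ∧ x * a ∈ J)

namespace DirGraph

/-- Generators of the path algebra: vertices and edges. -/
abbrev Gen (E : DirGraph) : Type := E.V ⊕ E.Edge

variable (K : Type) [Field K] (E : DirGraph)

/-- The defining relations of the path algebra: vertices are orthogonal idempotents,
`s(e)·e = e`, `e·r(e) = e`, and all other vertex-edge products vanish. -/
inductive PathRel : FreeAlgebra K E.Gen → FreeAlgebra K E.Gen → Prop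
  | vv_eq (u : E.V) :
      PathRel (FreeAlgebra.ι K (Sum.inl u) * FreeAlgebra.ι K (Sum.inl u))
        (FreeAlgebra.ι K (Sum.inl u))
  | vv_ne (u v : E.V) : u ≠ v →
      PathRel (FreeAlgebra.ι K (Sum.inl u) * FreeAlgebra.ι K (Sum.inl v)) 0
  | ve_eq (e : E.Edge) :
      PathRel (FreeAlgebra.ι K (Sum.inl (E.s e)) * FreeAlgebra.ι K (Sum.inr e))
        (FreeAlgebra.ι K (Sum.inr e))
  | ve_ne (u : E.V) (e : E.Edge) : E.s e ≠ u →
      PathRel (FreeAlgebra.ι K (Sum.inl u) * FreeAlgebra.ι K (Sum.inr e)) 0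
  | ev_eq (e : E.Edge) :
      PathRel (FreeAlgebra.ι K (Sum.inr e) * FreeAlgebra.ι K (Sum.inl (E.r e)))
        (FreeAlgebra.ι K (Sum.inr e))
  | ev_ne (e : E.Edge) (u : E.V) : E.r e ≠ u →
      PathRel (FreeAlgebra.ι K (Sum.inr e) * FreeAlgebra.ι K (Sum.inl u)) 0

/-- The ambient unital algebra (the unitalization of the path algebra). -/
abbrev PA : Type := RingQuot (E.PathRel K)

/-- The image of a vertex in the path algebra. -/
noncomputable def vtx (u : E.V) : E.PA K :=
  RingQuot.mkAlgHom K (E.PathRel K) (FreeAlgebra.ι K (Sum.inl u))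

/-- The image of an edge in the path algebra. -/
noncomputable def edg (e : E.Edge) : E.PA K :=
  RingQuot.mkAlgHom K (E.PathRel K) (FreeAlgebra.ι K (Sum.inr e))

/-- The path algebra `KE`: the (non-unital) subalgebra spanned by all paths, i.e.
generated by the vertices and edges. -/
noncomputable def KE : NonUnitalSubalgebra K (E.PA K) :=
  NonUnitalAlgebra.adjoin K (Set.range (E.vtx K) ∪ Set.range (E.edg K))

/-- The center `Z(KE)` of the path algebra. -/
def relCenter : Set (E.PA K) :=
  {z | z ∈ E.KE K ∧ ∀ a ∈ E.KE K, a * z = z * a}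

/-- `E.IsPathFrom u v l` : the list of edges `l` is a path from `u` to `v`
(`l = []` is the trivial path at `u = v`). -/
def IsPathFrom : E.V → E.V → List E.Edge → Prop
  | u, v, [] => u = v
  | u, v, e :: l => E.s e = u ∧ IsPathFrom (E.r e) v l

/-- The element of the path algebra corresponding to the path starting at `u`
with list of edges `l` (for `l = []` this is the vertex `u` itself). -/
noncomputable def pathElem (u : E.V) (l : List E.Edge) : E.PA K :=
  E.vtx K u * (l.map (E.edg K)).prod

/-- The sum of all vertices: the unit of `KE` when `E⁰` is finite. -/
noncomputable def unitKE : E.PA K := ∑ᶠ u : E.V, E.vtx K u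

/-- The scalar multiples `K·1` of the unit of `KE`. -/
noncomputable def scalarSet : Set (E.PA K) := Set.range fun k : K => k • E.unitKE K

/-- One step in the underlying undirected graph. -/
def Step (u v : E.V) : Prop :=
  (∃ e : E.Edge, E.s e = u ∧ E.r e = v) ∨ (∃ e : E.Edge, E.s e = v ∧ E.r e = u)

/-- `u ∼ v` : the vertices `u` and `v` are connected in the underlying undirected graph. -/
def Connected (u v : E.V) : Prop := Relation.ReflTransGen E.Step u v

/-- The graph `E` is connected. -/
def IsConnectedGraph : Prop := ∀ u v : E.V, E.Connected u v

/-- The graph `E` is a cycle: `n ≥ 1` vertices `u₁, …, uₙ` and `n` edges `f₁, …, fₙ` with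
`s(fᵢ) = uᵢ`, `r(fᵢ) = uᵢ₊₁` (indices mod `n`). -/
def IsCycleGraph : Prop :=
  ∃ n : ℕ, ∃ hn : 0 < n, ∃ (hv : Fin n ≃ E.V) (he : Fin n ≃ E.Edge),
    ∀ i : Fin n, E.s (he i) = hv i ∧ E.r (he i) = hv ⟨(i.1 + 1) % n, Nat.mod_lt _ hn⟩

end DirGraph

/-!
A central element `z` of `KE` lies in the span of the paths, so it is determined by its
coefficients on paths. Commuting `z` with a vertex kills the coefficients of paths that are not
closed. Comparing coefficients in `e z = z e` shows that the coefficients of the trivial paths at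
`s e` and `r e` agree, and that the coefficients of nontrivial closed paths at `s e` all vanish iff
those at `r e` do: a closed path `e l` at `s e` corresponds to the closed path `l e` at `r e`, and
closed paths at `s e` not starting with `e` (at `r e` not ending with `e`) have coefficient zero.
At a sink or a source there is no nontrivial closed path, so by connectedness all these
coefficients vanish everywhere and the vertex coefficients are constant, i.e. `z ∈ K·1`.
-/

namespace DirGraph

open scoped Classical

variable {K : Type} [Field K] {E : DirGraph}

theorem isPathFrom_nil {u v : E.V} : E.IsPathFrom u v [] ↔ u = v := Iff.rfl

theorem isPathFrom_cons {u v : E.V} {e : E.Edge} {l : List E.Edge} :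
    E.IsPathFrom u v (e :: l) ↔ E.s e = u ∧ E.IsPathFrom (E.r e) v l := Iff.rfl

theorem isPathFrom_append {u w : E.V} {l l' : List E.Edge} :
    E.IsPathFrom u w (l ++ l') ↔ ∃ v, E.IsPathFrom u v l ∧ E.IsPathFrom v w l' := by
  induction l generalizing u with
  | nil => simp [isPathFrom_nil]
  | cons e l ih => simp [isPathFrom_cons, ih, and_assoc]

theorem IsPathFrom.range_eq_of_concat {u w : E.V} {l : List E.Edge} {e : E.Edge}
    (h : E.IsPathFrom u w (l ++ [e])) : E.r e = w := by
  obtain ⟨-, -, -, h⟩ := isPathFrom_append.1 h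
  exact h

theorem vtx_mul_vtx (u v : E.V) :
    E.vtx K u * E.vtx K v = if u = v then E.vtx K u else 0 := by
  split_ifs with h
  · subst h
    simpa only [map_mul, vtx] using RingQuot.mkAlgHom_rel K (PathRel.vv_eq (K := K) (E := E) u)
  · simpa only [map_mul, map_zero, vtx] using
      RingQuot.mkAlgHom_rel K (PathRel.vv_ne (K := K) (E := E) u v h)

theorem vtx_source_mul_edg (e : E.Edge) : E.vtx K (E.s e) * E.edg K e = E.edg K e := by
  simpa only [map_mul, vtx, edg] using RingQuot.mkAlgHom_rel K (PathRel.ve_eq (K := K) (E := E) e)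

theorem edg_mul_vtx_range (e : E.Edge) : E.edg K e * E.vtx K (E.r e) = E.edg K e := by
  simpa only [map_mul, vtx, edg] using RingQuot.mkAlgHom_rel K (PathRel.ev_eq (K := K) (E := E) e)

theorem pathElem_nil (u : E.V) : E.pathElem K u [] = E.vtx K u := by
  simp [pathElem]

theorem pathElem_cons {e : E.Edge} (l : List E.Edge) :
    E.pathElem K (E.s e) (e :: l) = E.edg K e * E.pathElem K (E.r e) l := by
  simp only [pathElem, List.map_cons, List.prod_cons]
  rw [← mul_assoc, vtx_source_mul_edg, ← mul_assoc, edg_mul_vtx_range]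

theorem pathElem_singleton (e : E.Edge) : E.pathElem K (E.s e) [e] = E.edg K e := by
  rw [pathElem_cons, pathElem_nil, edg_mul_vtx_range]

theorem pathElem_mul_pathElem {u w : E.V} {l : List E.Edge} (h : E.IsPathFrom u w l)
    (v : E.V) (l' : List E.Edge) :
    E.pathElem K u l * E.pathElem K v l' = if w = v then E.pathElem K u (l ++ l') else 0 := by
  induction l generalizing u with
  | nil =>
    rw [isPathFrom_nil] at h
    subst h
    rw [pathElem_nil, pathElem, ← mul_assoc, vtx_mul_vtx, List.nil_append]
    split_ifs with h
    · rw [h, pathElem]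
    · rw [zero_mul]
  | cons e l ih =>
    obtain ⟨rfl, hl⟩ := isPathFrom_cons.1 h
    rw [pathElem_cons, mul_assoc, ih hl, List.cons_append, pathElem_cons, mul_ite, mul_zero]

variable (K) in
noncomputable def guardedMap (a : E.V) (f : E.V × List E.Edge → E.V × List E.Edge) :
    Module.End K (E.V × List E.Edge →₀ K) :=
  Finsupp.lsum K fun p => if p.1 = a then Finsupp.lsingle (f p) else 0

theorem guardedMap_single (a : E.V) (f : E.V × List E.Edge → E.V × List E.Edge)
    (p : E.V × List E.Edge) (k : K) :
    guardedMap K a f (Finsupp.single p k) = if p.1 = a then Finsupp.single (f p) k else 0 := by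
  rw [guardedMap, Finsupp.lsum_single]
  split_ifs <;> simp

theorem guardedMap_mul_guardedMap {a b : E.V} {f g : E.V × List E.Edge → E.V × List E.Edge}
    (h : ∀ p, p.1 = b → (g p).1 = a) :
    guardedMap K a f * guardedMap K b g = guardedMap K b (f ∘ g) := by
  refine Finsupp.lhom_ext fun p k => ?_
  simp only [Module.End.mul_apply, guardedMap_single]
  split_ifs with hp
  · simp [guardedMap_single, h p hp]
  · simp

theorem guardedMap_mul_guardedMap_eq_zero {a b : E.V}
    {f g : E.V × List E.Edge → E.V × List E.Edge} (h : ∀ p, p.1 = b → (g p).1 ≠ a) :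
    guardedMap K a f * guardedMap K b g = 0 := by
  refine Finsupp.lhom_ext fun p k => ?_
  simp only [Module.End.mul_apply, guardedMap_single]
  split_ifs with hp
  · simp [guardedMap_single, h p hp]
  · simp

variable (K E) in
/-- `KE` acting on formal words `(u, l)` by left concatenation. Acting on the trivial word at `w`
sends a path ending at `w` to its own word, which separates the paths (`pathCoeff_pathElem`). -/
noncomputable def pathRep : E.PA K →ₐ[K] Module.End K (E.V × List E.Edge →₀ K) :=
  RingQuot.liftAlgHom K ⟨FreeAlgebra.lift K (Sum.elim (fun u => guardedMap K u id)
    fun e => guardedMap K (E.r e) fun p => (E.s e, e :: p.2)), by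
    rintro _ _ h
    cases h <;>
    simp only [map_mul, map_zero, FreeAlgebra.lift_ι_apply, Sum.elim_inl, Sum.elim_inr] <;>
    first
    | rw [guardedMap_mul_guardedMap (by grind)]; rfl
    | exact guardedMap_mul_guardedMap_eq_zero (by grind)⟩

theorem pathRep_vtx (u : E.V) : pathRep K E (E.vtx K u) = guardedMap K u id := by
  simp [pathRep, vtx]

theorem pathRep_edg (e : E.Edge) :
    pathRep K E (E.edg K e) = guardedMap K (E.r e) fun p => (E.s e, e :: p.2) := by
  simp [pathRep, edg]

theorem pathRep_pathElem {u v : E.V} {l : List E.Edge} (h : E.IsPathFrom u v l)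
    (w : E.V) (m : List E.Edge) :
    pathRep K E (E.pathElem K u l) (Finsupp.single (w, m) 1) =
      if v = w then Finsupp.single (u, l ++ m) 1 else 0 := by
  induction l generalizing u with
  | nil =>
    rw [isPathFrom_nil] at h
    subst h
    rw [pathElem_nil, pathRep_vtx, guardedMap_single]
    by_cases huw : u = w
    · simp [huw]
    · simp [huw, Ne.symm huw]
  | cons e l ih =>
    obtain ⟨rfl, hl⟩ := isPathFrom_cons.1 h
    rw [pathElem_cons, map_mul, Module.End.mul_apply, ih hl, pathRep_edg]
    split_ifs <;> simp [guardedMap_single]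

variable (K) in
noncomputable def pathCoeff (u w : E.V) (l : List E.Edge) : E.PA K →ₗ[K] K :=
  Finsupp.lapply (u, l) ∘ₗ LinearMap.applyₗ (Finsupp.single (w, []) 1) ∘ₗ
    (pathRep K E).toLinearMap

theorem pathCoeff_pathElem {u' w' : E.V} {l' : List E.Edge} (h : E.IsPathFrom u' w' l')
    (u w : E.V) (l : List E.Edge) :
    pathCoeff K u w l (E.pathElem K u' l') = if u' = u ∧ w' = w ∧ l' = l then 1 else 0 := by
  simp only [pathCoeff, LinearMap.coe_comp, Function.comp_apply, AlgHom.toLinearMap_apply,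
    LinearMap.applyₗ_apply_apply, Finsupp.lapply_apply, pathRep_pathElem h, List.append_nil]
  by_cases hw : w' = w <;> simp [hw, Finsupp.single_apply, and_comm]

variable (K E) in
noncomputable def pathSpan : Submodule K (E.PA K) :=
  Submodule.span K {x | ∃ u w l, E.IsPathFrom u w l ∧ E.pathElem K u l = x}

theorem pathElem_mem_pathSpan {u w : E.V} {l : List E.Edge} (h : E.IsPathFrom u w l) :
    E.pathElem K u l ∈ pathSpan K E :=
  Submodule.subset_span ⟨u, w, l, h, rfl⟩

theorem mul_mem_pathSpan {x y : E.PA K} (hx : x ∈ pathSpan K E) (hy : y ∈ pathSpan K E) :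
    x * y ∈ pathSpan K E := by
  have hxy := Submodule.mul_mem_mul hx hy
  rw [pathSpan, Submodule.span_mul_span] at hxy
  refine Submodule.span_le.2 ?_ hxy
  rintro _ ⟨_, ⟨u, w, l, h, rfl⟩, _, ⟨v, w', l', h', rfl⟩, rfl⟩
  change E.pathElem K u l * E.pathElem K v l' ∈ pathSpan K E
  rw [pathElem_mul_pathElem h]
  split_ifs with hwv
  · subst hwv
    exact pathElem_mem_pathSpan (isPathFrom_append.2 ⟨w, h, h'⟩)
  · exact zero_mem _

theorem KE_le_pathSpan : (E.KE K).toSubmodule ≤ pathSpan K E := by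
  refine NonUnitalAlgebra.adjoin_le (S := { pathSpan K E with mul_mem' := mul_mem_pathSpan }) ?_
  rintro _ (⟨u, rfl⟩ | ⟨e, rfl⟩)
  · rw [← pathElem_nil]
    exact pathElem_mem_pathSpan (isPathFrom_nil.2 rfl)
  · rw [← pathElem_singleton]
    exact pathElem_mem_pathSpan (isPathFrom_cons.2 ⟨rfl, isPathFrom_nil.2 rfl⟩)

theorem eq_zero_of_pathCoeff {x : E.PA K} (hx : x ∈ pathSpan K E)
    (h : ∀ u w l, pathCoeff K u w l x = 0) : x = 0 := by
  obtain ⟨c, hc, rfl⟩ := Submodule.mem_span_set.1 hx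
  suffices c.support = ∅ by simp [Finsupp.support_eq_empty.1 this]
  refine Finset.eq_empty_of_forall_notMem fun a hmem => Finsupp.mem_support_iff.1 hmem ?_
  obtain ⟨u, w, l, hp, rfl⟩ := hc hmem
  have hdual : ∀ b ∈ c.support, pathCoeff K u w l b = if b = E.pathElem K u l then 1 else 0 := by
    intro b hb
    obtain ⟨u', w', l', hp', rfl⟩ := hc hb
    by_cases heq : E.pathElem K u' l' = E.pathElem K u l
    · rw [heq, if_pos rfl, pathCoeff_pathElem hp, if_pos ⟨rfl, rfl, rfl⟩]
    · rw [if_neg heq, pathCoeff_pathElem hp', if_neg]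
      rintro ⟨rfl, rfl, rfl⟩
      exact heq rfl
  rw [← h u w l, Finsupp.sum, map_sum, Finset.sum_eq_single_of_mem _ hmem]
  · rw [map_smul, hdual _ hmem, if_pos rfl, smul_eq_mul, mul_one]
  · intro b hb hne
    rw [map_smul, hdual b hb, if_neg hne, smul_zero]

theorem eqOn_pathSpan {f g : E.PA K →ₗ[K] K}
    (h : ∀ u w l, E.IsPathFrom u w l → f (E.pathElem K u l) = g (E.pathElem K u l)) :
    Set.EqOn f g (pathSpan K E) :=
  LinearMap.eqOn_span' (by rintro _ ⟨u, w, l, hp, rfl⟩; exact h u w l hp)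

theorem vtx_mul_pathElem (v u : E.V) (l : List E.Edge) :
    E.vtx K v * E.pathElem K u l = if v = u then E.pathElem K u l else 0 := by
  rw [← pathElem_nil, pathElem_mul_pathElem (isPathFrom_nil.2 rfl)]
  split_ifs with h <;> simp [h]

theorem pathElem_mul_vtx {u w : E.V} {l : List E.Edge} (h : E.IsPathFrom u w l) (v : E.V) :
    E.pathElem K u l * E.vtx K v = if w = v then E.pathElem K u l else 0 := by
  rw [← pathElem_nil, pathElem_mul_pathElem h, List.append_nil]

theorem edg_mul_pathElem (e : E.Edge) (u : E.V) (l : List E.Edge) :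
    E.edg K e * E.pathElem K u l = if E.r e = u then E.pathElem K (E.s e) (e :: l) else 0 := by
  rw [← pathElem_singleton, pathElem_mul_pathElem (isPathFrom_cons.2 ⟨rfl, isPathFrom_nil.2 rfl⟩)]
  rfl

theorem pathElem_mul_edg {u w : E.V} {l : List E.Edge} (h : E.IsPathFrom u w l) (e : E.Edge) :
    E.pathElem K u l * E.edg K e = if w = E.s e then E.pathElem K u (l ++ [e]) else 0 := by
  rw [← pathElem_singleton, pathElem_mul_pathElem h]

theorem pathCoeff_eq_zero_of_not_isPathFrom {z : E.PA K} (hz : z ∈ pathSpan K E) {u w : E.V}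
    {l : List E.Edge} (h : ¬E.IsPathFrom u w l) : pathCoeff K u w l z = 0 :=
  eqOn_pathSpan (g := 0) (fun u' w' l' hp => by
    rw [pathCoeff_pathElem hp, if_neg (by rintro ⟨rfl, rfl, rfl⟩; exact h hp)]; rfl) hz

theorem pathCoeff_vtx_mul {z : E.PA K} (hz : z ∈ pathSpan K E) (u w v : E.V) (l : List E.Edge) :
    pathCoeff K u w l (E.vtx K v * z) = if v = u then pathCoeff K u w l z else 0 := by
  refine (eqOn_pathSpan (f := pathCoeff K u w l ∘ₗ LinearMap.mulLeft K (E.vtx K v))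
    (g := if v = u then pathCoeff K u w l else 0) (fun u' w' l' hp => ?_) hz).trans ?_
  · simp only [LinearMap.comp_apply, LinearMap.mulLeft_apply, vtx_mul_pathElem]
    split_ifs <;> grind [pathCoeff_pathElem, LinearMap.zero_apply]
  · split_ifs <;> rfl

theorem pathCoeff_mul_vtx {z : E.PA K} (hz : z ∈ pathSpan K E) (u w v : E.V) (l : List E.Edge) :
    pathCoeff K u w l (z * E.vtx K v) = if w = v then pathCoeff K u w l z else 0 := by
  refine (eqOn_pathSpan (f := pathCoeff K u w l ∘ₗ LinearMap.mulRight K (E.vtx K v))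
    (g := if w = v then pathCoeff K u w l else 0) (fun u' w' l' hp => ?_) hz).trans ?_
  · simp only [LinearMap.comp_apply, LinearMap.mulRight_apply, pathElem_mul_vtx hp]
    split_ifs <;> grind [pathCoeff_pathElem, LinearMap.zero_apply]
  · split_ifs <;> rfl

theorem pathCoeff_edg_mul {z : E.PA K} (hz : z ∈ pathSpan K E) (u w : E.V) (e e' : E.Edge)
    (l : List E.Edge) :
    pathCoeff K u w (e' :: l) (E.edg K e * z) =
      if u = E.s e ∧ e' = e then pathCoeff K (E.r e) w l z else 0 := by
  refine (eqOn_pathSpan (f := pathCoeff K u w (e' :: l) ∘ₗ LinearMap.mulLeft K (E.edg K e))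
    (g := if u = E.s e ∧ e' = e then pathCoeff K (E.r e) w l else 0)
    (fun u' w' l' hp => ?_) hz).trans ?_
  · have hp' : E.r e = u' → E.IsPathFrom (E.s e) w' (e :: l') := fun h ↦ ⟨rfl, h ▸ hp⟩
    simp only [LinearMap.comp_apply, LinearMap.mulLeft_apply, edg_mul_pathElem]
    split_ifs <;> grind [pathCoeff_pathElem, LinearMap.zero_apply]
  · split_ifs <;> rfl

theorem pathCoeff_mul_edg {z : E.PA K} (hz : z ∈ pathSpan K E) (u w : E.V) (e e' : E.Edge)
    (l : List E.Edge) :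
    pathCoeff K u w (l ++ [e']) (z * E.edg K e) =
      if e' = e ∧ w = E.r e then pathCoeff K u (E.s e) l z else 0 := by
  refine (eqOn_pathSpan (f := pathCoeff K u w (l ++ [e']) ∘ₗ LinearMap.mulRight K (E.edg K e))
    (g := if e' = e ∧ w = E.r e then pathCoeff K u (E.s e) l else 0)
    (fun u' w' l' hp => ?_) hz).trans ?_
  · have hp' : w' = E.s e → E.IsPathFrom u' (E.r e) (l' ++ [e]) :=
      fun h ↦ isPathFrom_append.2 ⟨w', hp, h.symm, rfl⟩
    simp only [LinearMap.comp_apply, LinearMap.mulRight_apply, pathElem_mul_edg hp]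
    split_ifs <;> grind [pathCoeff_pathElem, LinearMap.zero_apply, List.append_singleton_inj]
  · split_ifs <;> rfl

theorem vtx_mem_KE (u : E.V) : E.vtx K u ∈ E.KE K :=
  NonUnitalAlgebra.subset_adjoin K (Set.mem_union_left _ ⟨u, rfl⟩)

theorem edg_mem_KE (e : E.Edge) : E.edg K e ∈ E.KE K :=
  NonUnitalAlgebra.subset_adjoin K (Set.mem_union_right _ ⟨e, rfl⟩)

theorem pathCoeff_eq_zero_of_mem_relCenter {z : E.PA K} (hz : z ∈ E.relCenter K) {u w : E.V}
    (huw : u ≠ w) (l : List E.Edge) : pathCoeff K u w l z = 0 := by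
  have hzs := KE_le_pathSpan hz.1
  have hcomm := congrArg (pathCoeff K u w l) (hz.2 _ (vtx_mem_KE u))
  rwa [pathCoeff_vtx_mul hzs, if_pos rfl, pathCoeff_mul_vtx hzs, if_neg huw.symm] at hcomm

theorem pathCoeff_nil_source_eq_range {z : E.PA K} (hz : z ∈ E.relCenter K) (e : E.Edge) :
    pathCoeff K (E.s e) (E.s e) [] z = pathCoeff K (E.r e) (E.r e) [] z := by
  have hzs := KE_le_pathSpan hz.1
  have hcomm := congrArg (pathCoeff K (E.s e) (E.r e) ([] ++ [e])) (hz.2 _ (edg_mem_KE e))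
  rw [pathCoeff_mul_edg hzs, if_pos ⟨rfl, rfl⟩, List.nil_append, pathCoeff_edg_mul hzs,
    if_pos ⟨rfl, rfl⟩] at hcomm
  exact hcomm.symm

theorem pathCoeff_rotate {z : E.PA K} (hz : z ∈ E.relCenter K) (e e₁ e₂ : E.Edge)
    (l : List E.Edge) :
    (if e₁ = e then pathCoeff K (E.r e) (E.r e) (l ++ [e₂]) z else 0) =
      if e₂ = e then pathCoeff K (E.s e) (E.s e) (e₁ :: l) z else 0 := by
  have hzs := KE_le_pathSpan hz.1
  have hcomm := congrArg (pathCoeff K (E.s e) (E.r e) (e₁ :: l ++ [e₂])) (hz.2 _ (edg_mem_KE e))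
  rw [pathCoeff_mul_edg hzs, List.cons_append, pathCoeff_edg_mul hzs] at hcomm
  simpa only [true_and, and_true] using hcomm

variable (K) in
def LoopCoeffsVanish (z : E.PA K) (v : E.V) : Prop :=
  ∀ l ≠ [], pathCoeff K v v l z = 0

theorem loopCoeffsVanish_source_iff {z : E.PA K} (hz : z ∈ E.relCenter K) (e : E.Edge) :
    LoopCoeffsVanish K z (E.s e) ↔ LoopCoeffsVanish K z (E.r e) := by
  constructor
  · intro h l hl
    obtain ⟨l, e₂, rfl⟩ := (List.eq_nil_or_concat' l).resolve_left hl
    have hrot := pathCoeff_rotate hz e e e₂ l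
    rw [if_pos rfl] at hrot
    rw [hrot]
    split_ifs
    exacts [h _ (List.cons_ne_nil _ _), rfl]
  · intro h l hl
    obtain ⟨e₁, l, rfl⟩ := List.exists_cons_of_ne_nil hl
    have hrot := pathCoeff_rotate hz e e₁ e l
    rw [if_pos rfl] at hrot
    rw [← hrot]
    split_ifs
    exacts [h _ (by simp), rfl]

theorem Connected.apply_eq {α : Sort*} {f : E.V → α} (hf : ∀ e, f (E.s e) = f (E.r e))
    {u v : E.V} (h : E.Connected u v) : f u = f v := by
  induction h with
  | refl => rfl
  | tail _ hstep ih =>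
    rcases hstep with ⟨e, rfl, rfl⟩ | ⟨e, rfl, rfl⟩
    exacts [ih.trans (hf e), ih.trans (hf e).symm]

theorem loopCoeffsVanish_of_isSink {z : E.PA K} (hz : z ∈ E.relCenter K) {v : E.V}
    (hv : ∀ e, E.s e ≠ v) : LoopCoeffsVanish K z v := by
  intro l hl
  refine pathCoeff_eq_zero_of_not_isPathFrom (KE_le_pathSpan hz.1) ?_
  obtain ⟨e, l, rfl⟩ := List.exists_cons_of_ne_nil hl
  exact fun h ↦ hv e (isPathFrom_cons.1 h).1

theorem loopCoeffsVanish_of_isSource {z : E.PA K} (hz : z ∈ E.relCenter K) {v : E.V}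
    (hv : ∀ e, E.r e ≠ v) : LoopCoeffsVanish K z v := by
  intro l hl
  refine pathCoeff_eq_zero_of_not_isPathFrom (KE_le_pathSpan hz.1) ?_
  obtain ⟨l, e, rfl⟩ := (List.eq_nil_or_concat' l).resolve_left hl
  exact fun h ↦ hv e h.range_eq_of_concat

theorem unitKE_eq_sum [Fintype E.V] : E.unitKE K = ∑ u, E.vtx K u :=
  finsum_eq_sum_of_fintype _

theorem unitKE_mem_pathSpan [Finite E.V] : E.unitKE K ∈ pathSpan K E := by
  have := Fintype.ofFinite E.V
  rw [unitKE_eq_sum]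
  exact Submodule.sum_mem _ fun u _ ↦ pathElem_nil (K := K) u ▸ pathElem_mem_pathSpan rfl

theorem pathCoeff_unitKE [Finite E.V] (u w : E.V) (l : List E.Edge) :
    pathCoeff K u w l (E.unitKE K) = if u = w ∧ l = [] then 1 else 0 := by
  have := Fintype.ofFinite E.V
  rw [unitKE_eq_sum, map_sum, Finset.sum_eq_single_of_mem u (Finset.mem_univ u)]
  · simp [← pathElem_nil, pathCoeff_pathElem (isPathFrom_nil.2 rfl), eq_comm]
  · intro u' _ hu'
    rw [← pathElem_nil, pathCoeff_pathElem (isPathFrom_nil.2 rfl), if_neg fun h ↦ hu' h.1]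

theorem mem_scalarSet_of_loopCoeffsVanish [Finite E.V] (hconn : E.IsConnectedGraph)
    {z : E.PA K} (hz : z ∈ E.relCenter K) {v : E.V} (hv : LoopCoeffsVanish K z v) :
    z ∈ E.scalarSet K := by
  have hzs := KE_le_pathSpan hz.1
  refine ⟨pathCoeff K v v [] z, (sub_eq_zero.1 ?_).symm⟩
  refine eq_zero_of_pathCoeff (sub_mem hzs (Submodule.smul_mem _ _ unitKE_mem_pathSpan))
    fun u w l ↦ ?_
  rw [map_sub, map_smul, pathCoeff_unitKE, smul_eq_mul]
  by_cases huw : u = w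
  · subst huw
    cases l with
    | nil =>
      rw [if_pos ⟨rfl, rfl⟩, mul_one, sub_eq_zero]
      exact ((hconn v u).apply_eq (f := fun u ↦ pathCoeff K u u [] z)
        (pathCoeff_nil_source_eq_range hz)).symm
    | cons e l =>
      have hu : LoopCoeffsVanish K z u :=
        (hconn v u).apply_eq (fun e ↦ propext (loopCoeffsVanish_source_iff hz e)) ▸ hv
      rw [if_neg (by simp), mul_zero, sub_zero, hu _ (List.cons_ne_nil _ _)]
  · rw [if_neg (fun h ↦ huw h.1), mul_zero, sub_zero, pathCoeff_eq_zero_of_mem_relCenter hz huw]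

theorem relCenter_subset_scalarSet [Finite E.V] (hconn : E.IsConnectedGraph) (v : E.V)
    (hv : (∀ e, E.s e ≠ v) ∨ ∀ e, E.r e ≠ v) : E.relCenter K ⊆ E.scalarSet K :=
  fun _ hz ↦ mem_scalarSet_of_loopCoeffsVanish hconn hz
    (hv.elim (loopCoeffsVanish_of_isSink hz) (loopCoeffsVanish_of_isSource hz))

end DirGraph

theorem stmt6_general (K : Type) [Field K] (E : DirGraph) [Finite E.V]
    (hconn : E.IsConnectedGraph)
    (hns : ¬ E.relCenter K ⊆ E.scalarSet K) :
    (∀ v : E.V, ∃ e : E.Edge, E.s e = v) ∧ (∀ v : E.V, ∃ e : E.Edge, E.r e = v) := by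
  refine ⟨fun v ↦ ?_, fun v ↦ ?_⟩ <;> by_contra! hv
  · exact hns (DirGraph.relCenter_subset_scalarSet hconn v (.inl hv))
  · exact hns (DirGraph.relCenter_subset_scalarSet hconn v (.inr hv))

/-- If `E` is finite connected and `0 ≠ Z(KE) ⊄ K·1`, then `E` has
no sinks and no sources. -/
theorem stmt6 (K : Type) [Field K] (E : DirGraph) [Finite E.V]
    (hconn : E.IsConnectedGraph)
    (hne : ∃ z ∈ E.relCenter K, z ≠ 0)
    (hns : ¬ E.relCenter K ⊆ E.scalarSet K) :
    (∀ v : E.V, ∃ e : E.Edge, E.s e = v) ∧ (∀ v : E.V, ∃ e : E.Edge, E.r e = v) :=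
  stmt6_general K E hconn hns
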